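/- arXiv:2605.31388 — 2 statements merged into one kernel-verified Lean document; each statement's English description precedes it below -/
import Mathlib

section
/- Differentiability and gradient of the soft fixed point (Theorem 3.3): in the finite soft MOMDP setup, let V : ℝ^n → (S → ℝ) be the map sending each parameter θ to the unique fixed point of T_θ (i.e., V(θ) = T_θ(V(θ)) for all θ). Then for each state s the function θ ↦ V(θ)(s) is differentiable on ℝ^n, and its gradient equals the vector value function of the softmax policy: ∇_θ V(θ)(s) = w^{π_θ}(s), where π_θ(a|s) = exp(Q_θ(s,a)/β) / Σ_{a'} exp(Q_θ(s,a')/β) with Q_θ(s,a) = ⟨θ, r(s,a)⟩ + γ Σ_{s'} T(s'|s,a) V(θ)(s'), and w^{π_θ} : S → ℝ^n is the unique solution of the vector Bellman evaluation equation w(s) = Σ_a π_θ(a|s)( r(s,a) + γ Σ_{s'} T(s'|s,a) w(s') ). -/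
/-!
`V θ` is the fixed point of `G (θ, ·)`, where `G (θ, v) s = β log ∑ₐ exp (Q(s, a) / β)` is smooth,
Lipschitz in `θ` and a `γ`-contraction in `v`; hence `V` is Lipschitz. The derivative of
log-sum-exp is the softmax average, so the derivative `D` of `G` at `(θ, V θ)` sends `(h, v)` to
the `π_θ`-average of `⟨h, r⟩ + γ T v`, and the Bellman equation for `W` says exactly that
`L h = (⟨W s, h⟩)ₛ` solves `L h = D (h, L h)`. The error `e = V x - V θ - L (x - θ)` then satisfies
`e = ρ + D (0, e)`, where `ρ = o(x - θ)` is the remainder of the linearization of `G`, and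
`‖D (0, ·)‖ ≤ γ` gives `‖e‖ ≤ ‖ρ‖ / (1 - γ)`.
-/

open Filter Topology Asymptotics NNReal

theorem abs_sum_mul_le_of_sum_eq_one {A : Type*} [Fintype A] {w u : A → ℝ} {c : ℝ}
    (hw0 : ∀ a, 0 ≤ w a) (hw1 : ∑ a, w a = 1) (hu : ∀ a, |u a| ≤ c) :
    |∑ a, w a * u a| ≤ c :=
  calc |∑ a, w a * u a| ≤ ∑ a, w a * |u a| := by
        refine (Finset.abs_sum_le_sum_abs _ _).trans_eq (Finset.sum_congr rfl fun a _ => ?_)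
        rw [abs_mul, abs_of_nonneg (hw0 a)]
    _ ≤ ∑ a, w a * c := Finset.sum_le_sum fun a _ => mul_le_mul_of_nonneg_left (hu a) (hw0 a)
    _ = c := by rw [← Finset.sum_mul, hw1, one_mul]

section LogSumExp

open Real

variable {A : Type*} [Fintype A]

noncomputable def logSumExp (β : ℝ) (u : A → ℝ) : ℝ := β * log (∑ a, exp (u a / β))

noncomputable def softmax (β : ℝ) (u : A → ℝ) (a : A) : ℝ :=
  exp (u a / β) / ∑ a', exp (u a' / β)

variable [Nonempty A] {β : ℝ}

theorem sum_exp_div_pos (β : ℝ) (u : A → ℝ) : 0 < ∑ a, exp (u a / β) :=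
  Finset.sum_pos (fun _ _ => exp_pos _) Finset.univ_nonempty

theorem softmax_nonneg (β : ℝ) (u : A → ℝ) (a : A) : 0 ≤ softmax β u a :=
  div_nonneg (exp_pos _).le (sum_exp_div_pos β u).le

theorem sum_softmax (β : ℝ) (u : A → ℝ) : ∑ a, softmax β u a = 1 := by
  simp only [softmax]
  rw [← Finset.sum_div, div_self (sum_exp_div_pos β u).ne']

theorem logSumExp_le_add (hβ : 0 < β) {u v : A → ℝ} {c : ℝ} (h : ∀ a, u a ≤ v a + c) :
    logSumExp β u ≤ logSumExp β v + c := by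
  have hexp : ∑ a, exp (u a / β) ≤ exp (c / β) * ∑ a, exp (v a / β) := by
    rw [Finset.mul_sum]
    refine Finset.sum_le_sum fun a _ => ?_
    rw [← exp_add, ← add_div, exp_le_exp]
    exact div_le_div_of_nonneg_right (by linarith [h a]) hβ.le
  have hlog := log_le_log (sum_exp_div_pos β u) hexp
  rw [log_mul (exp_ne_zero _) (sum_exp_div_pos β v).ne', log_exp] at hlog
  have hmul := mul_le_mul_of_nonneg_left hlog hβ.le
  rw [mul_add, mul_div_cancel₀ _ hβ.ne'] at hmul
  unfold logSumExp
  linarith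

theorem lipschitzWith_logSumExp (hβ : 0 < β) : LipschitzWith 1 (logSumExp (A := A) β) := by
  refine LipschitzWith.of_dist_le_mul fun u v => ?_
  have hle : ∀ u v : A → ℝ, ∀ a, u a ≤ v a + dist u v := fun u v a => by
    have hdist := dist_le_pi_dist u v a
    rw [Real.dist_eq] at hdist
    linarith [le_abs_self (u a - v a)]
  rw [NNReal.coe_one, one_mul, Real.dist_eq, abs_le]
  constructor
  · linarith [logSumExp_le_add hβ (hle v u), dist_comm u v]
  · linarith [logSumExp_le_add hβ (hle u v)]

theorem hasFDerivAt_logSumExp (hβ : β ≠ 0) (u : A → ℝ) :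
    HasFDerivAt (logSumExp β)
      (∑ a, softmax β u a • (ContinuousLinearMap.proj a : (A → ℝ) →L[ℝ] ℝ)) u := by
  have hsum : HasFDerivAt (fun u : A → ℝ => ∑ a, exp (u a / β))
      (∑ a, exp (u a / β) • β⁻¹ • (ContinuousLinearMap.proj a : (A → ℝ) →L[ℝ] ℝ)) u :=
    HasFDerivAt.fun_sum fun a _ => by
      simpa only [← div_eq_inv_mul] using ((hasFDerivAt_apply (𝕜 := ℝ) a u).const_mul β⁻¹).exp
  refine ((hsum.log (sum_exp_div_pos β u).ne').const_mul β).congr_fderiv ?_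
  ext du
  simp only [smul_apply, sum_apply, ContinuousLinearMap.proj_apply, smul_eq_mul, Finset.mul_sum,
    softmax]
  refine Finset.sum_congr rfl fun a _ => ?_
  field_simp

end LogSumExp

section FixedPoint

variable {E F : Type*}

theorem lipschitzWith_of_parametric_fixedPoint [PseudoMetricSpace E] [MetricSpace F]
    {G : E × F → F} {V : E → F} {K γ : ℝ≥0}
    (hGx : ∀ v, LipschitzWith K fun x => G (x, v)) (hGv : ∀ x, ContractingWith γ fun v => G (x, v))
    (hV : ∀ x, V x = G (x, V x)) : LipschitzWith (K / (1 - γ)) V := by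
  refine LipschitzWith.of_dist_le_mul fun x y => ?_
  obtain ⟨hγ, hGy⟩ := hGv y
  have h1γ : (0 : ℝ) < 1 - γ := sub_pos.2 (by exact_mod_cast hγ)
  have hstep : dist (V x) (V y) ≤ K * dist x y + γ * dist (V x) (V y) :=
    calc dist (V x) (V y) = dist (G (x, V x)) (G (y, V y)) := by rw [← hV, ← hV]
      _ ≤ dist (G (x, V x)) (G (y, V x)) + dist (G (y, V x)) (G (y, V y)) := dist_triangle _ _ _
      _ ≤ K * dist x y + γ * dist (V x) (V y) :=
        add_le_add ((hGx (V x)).dist_le_mul x y) (hGy.dist_le_mul (V x) (V y))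
  rw [NNReal.coe_div, NNReal.coe_sub hγ.le, NNReal.coe_one, div_mul_eq_mul_div, le_div_iff₀ h1γ]
  linarith

variable {𝕜 : Type*} [NontriviallyNormedField 𝕜]
  [NormedAddCommGroup E] [NormedSpace 𝕜 E] [NormedAddCommGroup F] [NormedSpace 𝕜 F]

theorem hasFDerivAt_of_parametric_fixedPoint {G : E × F → F} {V : E → F} {x₀ : E}
    {D : E × F →L[𝕜] F} {L : E →L[𝕜] F} {γ : ℝ}
    (hV : ∀ x, V x = G (x, V x)) (hG : HasFDerivAt G D (x₀, V x₀))
    (hVO : (fun x => V x - V x₀) =O[𝓝 x₀] fun x => x - x₀)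
    (hγ : γ < 1) (hD : ∀ v, ‖D (0, v)‖ ≤ γ * ‖v‖) (hL : ∀ h, L h = D (h, L h)) :
    HasFDerivAt V L x₀ := by
  have hpair : (fun x => (x, V x) - (x₀, V x₀)) =O[𝓝 x₀] fun x => x - x₀ :=
    (isBigO_refl _ _).prod_left hVO
  have htend : Tendsto (fun x => (x, V x)) (𝓝 x₀) (𝓝 (x₀, V x₀)) := by
    have h0 : Tendsto (fun x => x - x₀) (𝓝 x₀) (𝓝 0) := tendsto_sub_nhds_zero_iff.2 tendsto_id
    exact tendsto_sub_nhds_zero_iff.1 (hpair.trans_tendsto h0)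
  set ρ := fun x => G (x, V x) - G (x₀, V x₀) - D ((x, V x) - (x₀, V x₀))
  have hρ : ρ =o[𝓝 x₀] fun x => x - x₀ := (hG.isLittleO.comp_tendsto htend).trans_isBigO hpair
  set e := fun x => V x - V x₀ - L (x - x₀)
  -- linearity of `D` and `L = D (id, L)` turn the fixed-point equation into one for the error
  have he : ∀ x, e x = ρ x + D (0, e x) := by
    intro x
    have hsplit : (x, V x) - (x₀, V x₀) = (x - x₀, L (x - x₀)) + (0, e x) := by
      simp [e]
    simp only [ρ, e, ← hV, hsplit, map_add, ← hL]
    abel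
  have hbound : ∀ x, ‖e x‖ ≤ (1 - γ)⁻¹ * ‖ρ x‖ := by
    intro x
    have hle : ‖e x‖ ≤ ‖ρ x‖ + γ * ‖e x‖ := by
      calc ‖e x‖ = ‖ρ x + D (0, e x)‖ := by rw [← he]
        _ ≤ ‖ρ x‖ + γ * ‖e x‖ := (norm_add_le _ _).trans (by linarith [hD (e x)])
    rw [inv_mul_eq_div, le_div_iff₀ (sub_pos.2 hγ)]
    linarith
  exact HasFDerivAt.of_isLittleO <|
    (IsBigO.of_bound _ (Eventually.of_forall hbound)).trans_isLittleO hρ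

end FixedPoint

section SoftMDP

variable {S A ι : Type*} [Fintype S] [Fintype ι]

noncomputable def actionValue (T : S → A → S → ℝ) (γ : ℝ) (r : S → A → ι → ℝ) :
    EuclideanSpace ℝ ι × (S → ℝ) →L[ℝ] S → A → ℝ :=
  LinearMap.toContinuousLinearMap
    { toFun := fun z s a => ∑ i, z.1 i * r s a i + γ * ∑ s', T s a s' * z.2 s'
      map_add' := fun z w => by
        ext s a
        simp only [Prod.fst_add, Prod.snd_add, PiLp.add_apply, Pi.add_apply, add_mul, mul_add,
          Finset.sum_add_distrib]
        ring
      map_smul' := fun c z => by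
        ext s a
        simp only [Prod.smul_fst, Prod.smul_snd, PiLp.smul_apply, Pi.smul_apply, smul_eq_mul,
          mul_assoc, mul_left_comm _ c, ← Finset.mul_sum, RingHom.id_apply]
        ring }

@[simp]
theorem actionValue_apply (T : S → A → S → ℝ) (γ : ℝ) (r : S → A → ι → ℝ)
    (z : EuclideanSpace ℝ ι × (S → ℝ)) (s : S) (a : A) :
    actionValue T γ r z s a = ∑ i, z.1 i * r s a i + γ * ∑ s', T s a s' * z.2 s' :=
  rfl

variable [Fintype A]

noncomputable def policyAvg (π : S → A → ℝ) : (S → A → ℝ) →L[ℝ] S → ℝ :=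
  LinearMap.toContinuousLinearMap
    { toFun := fun u s => ∑ a, π s a * u s a
      map_add' := fun u v => by
        ext s
        simp only [Pi.add_apply, mul_add, Finset.sum_add_distrib]
      map_smul' := fun c u => by
        ext s
        simp only [Pi.smul_apply, smul_eq_mul, mul_left_comm _ c, ← Finset.mul_sum,
          RingHom.id_apply] }

@[simp]
theorem policyAvg_apply (π : S → A → ℝ) (u : S → A → ℝ) (s : S) :
    policyAvg π u s = ∑ a, π s a * u s a :=
  rfl

theorem norm_policyAvg_apply_le {π : S → A → ℝ} (hπ0 : ∀ s a, 0 ≤ π s a)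
    (hπ1 : ∀ s, ∑ a, π s a = 1) (u : S → A → ℝ) : ‖policyAvg π u‖ ≤ ‖u‖ :=
  (pi_norm_le_iff_of_nonneg (norm_nonneg u)).2 fun s =>
    abs_sum_mul_le_of_sum_eq_one (hπ0 s) (hπ1 s) fun a =>
      (norm_le_pi_norm (u s) a).trans (norm_le_pi_norm u s)

theorem norm_actionValue_zero_le {T : S → A → S → ℝ} (hT0 : ∀ s a s', 0 ≤ T s a s')
    (hT1 : ∀ s a, ∑ s', T s a s' = 1) {γ : ℝ} (hγ0 : 0 ≤ γ) (r : S → A → ι → ℝ) (v : S → ℝ) :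
    ‖actionValue T γ r (0, v)‖ ≤ γ * ‖v‖ := by
  refine (pi_norm_le_iff_of_nonneg (by positivity)).2 fun s =>
    (pi_norm_le_iff_of_nonneg (by positivity)).2 fun a => ?_
  have hT : |∑ s', T s a s' * v s'| ≤ ‖v‖ :=
    abs_sum_mul_le_of_sum_eq_one (hT0 s a) (hT1 s a) fun s' => norm_le_pi_norm v s'
  simpa [abs_mul, abs_of_nonneg hγ0] using mul_le_mul_of_nonneg_left hT hγ0

theorem inner_eq_policyAvg_actionValue {T : S → A → S → ℝ} {γ : ℝ} {r : S → A → ι → ℝ}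
    {π : S → A → ℝ} {W : S → EuclideanSpace ℝ ι}
    (hW : ∀ s i, W s i = ∑ a, π s a * (r s a i + γ * ∑ s', T s a s' * W s' i))
    (h : EuclideanSpace ℝ ι) :
    (fun s => inner ℝ (W s) h) =
      policyAvg π (actionValue T γ r (h, fun s => inner ℝ (W s) h)) := by
  funext s
  simp only [policyAvg_apply, actionValue_apply, PiLp.inner_apply, RCLike.inner_apply,
    conj_trivial]
  calc ∑ i, h i * W s i
      = ∑ i, h i * ∑ a, π s a * (r s a i + γ * ∑ s', T s a s' * W s' i) :=
        Finset.sum_congr rfl fun i _ => by rw [hW s i]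
    _ = _ := by
        simp only [Finset.mul_sum, mul_add, Finset.sum_add_distrib]
        rw [Finset.sum_comm]
        congr 1
        · exact Finset.sum_congr rfl fun a _ => Finset.sum_congr rfl fun i _ => by ring
        · rw [Finset.sum_comm]
          refine Finset.sum_congr rfl fun a _ => ?_
          rw [Finset.sum_comm]
          exact Finset.sum_congr rfl fun s' _ => Finset.sum_congr rfl fun i _ => by ring
noncomputable def softBellman (T : S → A → S → ℝ) (γ β : ℝ) (r : S → A → ι → ℝ)
    (z : EuclideanSpace ℝ ι × (S → ℝ)) : S → ℝ :=
  fun s => logSumExp β (actionValue T γ r z s)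

variable [Nonempty A] {T : S → A → S → ℝ} {γ β : ℝ} {r : S → A → ι → ℝ}

theorem dist_softBellman_le (hβ : 0 < β) (z z' : EuclideanSpace ℝ ι × (S → ℝ)) :
    dist (softBellman T γ β r z) (softBellman T γ β r z') ≤
      dist (actionValue T γ r z) (actionValue T γ r z') := by
  refine (dist_pi_le_iff dist_nonneg).2 fun s => ?_
  calc dist (softBellman T γ β r z s) (softBellman T γ β r z' s)
      ≤ dist (actionValue T γ r z s) (actionValue T γ r z' s) := by
        have h := (lipschitzWith_logSumExp hβ).dist_le_mul (actionValue T γ r z s)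
          (actionValue T γ r z' s)
        rwa [NNReal.coe_one, one_mul] at h
    _ ≤ dist (actionValue T γ r z) (actionValue T γ r z') := dist_le_pi_dist _ _ s

theorem softBellman_lipschitzWith_fst (hβ : 0 < β) (v : S → ℝ) :
    LipschitzWith ‖(actionValue T γ r).comp (ContinuousLinearMap.inl ℝ _ _)‖₊
      fun x => softBellman T γ β r (x, v) :=
  LipschitzWith.of_dist_le_mul fun x y => (dist_softBellman_le hβ _ _).trans <| by
    rw [dist_eq_norm, dist_eq_norm, ← map_sub, Prod.mk_sub_mk, sub_self, coe_nnnorm]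
    exact ((actionValue T γ r).comp (ContinuousLinearMap.inl ℝ _ _)).le_opNorm (x - y)

theorem softBellman_contractingWith_snd (hT0 : ∀ s a s', 0 ≤ T s a s')
    (hT1 : ∀ s a, ∑ s', T s a s' = 1) (hγ0 : 0 ≤ γ) (hγ1 : γ < 1) (hβ : 0 < β)
    (x : EuclideanSpace ℝ ι) : ContractingWith ⟨γ, hγ0⟩ fun v => softBellman T γ β r (x, v) :=
  ⟨hγ1, LipschitzWith.of_dist_le_mul fun v w => (dist_softBellman_le hβ _ _).trans <| by
    rw [dist_eq_norm, dist_eq_norm, ← map_sub, Prod.mk_sub_mk, sub_self]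
    exact norm_actionValue_zero_le hT0 hT1 hγ0 r (v - w)⟩

theorem hasFDerivAt_softBellman (hβ : β ≠ 0) (z : EuclideanSpace ℝ ι × (S → ℝ)) :
    HasFDerivAt (softBellman T γ β r)
      ((policyAvg fun s => softmax β (actionValue T γ r z s)).comp (actionValue T γ r)) z := by
  refine hasFDerivAt_pi'' fun s => ?_
  have := (hasFDerivAt_logSumExp hβ (actionValue T γ r z s)).comp z
    ((hasFDerivAt_apply s (actionValue T γ r z)).comp z (actionValue T γ r).hasFDerivAt)
  refine this.congr_fderiv (ContinuousLinearMap.ext fun dz => ?_)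
  simp only [ContinuousLinearMap.comp_apply, ContinuousLinearMap.proj_apply, sum_apply,
    smul_apply, smul_eq_mul, policyAvg_apply]

end SoftMDP

/-- Differentiability and gradient of the soft fixed point (Theorem 3.3).
`V θ` is the fixed point of the soft Bellman operator `T_θ`; at a parameter `θ`,
`Q` is the soft action-value `Q_θ`, `π` is the softmax policy `π_θ`, and
`W : S → ℝ^n` is the (unique) solution of the vector Bellman evaluation equation for
`π_θ`.  Then for each state `s`, the map `θ' ↦ V θ' s` has gradient `W s` at `θ`. -/
theorem stmt_5 {p n : ℕ} {A : Type*} [Fintype A] [Nonempty A]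
    (T : Fin p → A → Fin p → ℝ)
    (hT0 : ∀ s a s', 0 ≤ T s a s') (hT1 : ∀ s a, ∑ s', T s a s' = 1)
    (γ : ℝ) (hγ0 : 0 ≤ γ) (hγ1 : γ < 1)
    (β : ℝ) (hβ : 0 < β)
    (r : Fin p → A → Fin n → ℝ)
    (V : EuclideanSpace ℝ (Fin n) → Fin p → ℝ)
    (hV : ∀ θ s, V θ s = β * Real.log (∑ a : A, Real.exp
      ((∑ i, θ i * r s a i + γ * ∑ s', T s a s' * V θ s') / β)))
    (θ : EuclideanSpace ℝ (Fin n))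
    (Q : Fin p → A → ℝ)
    (hQ : ∀ s a, Q s a = ∑ i, θ i * r s a i + γ * ∑ s', T s a s' * V θ s')
    (π : Fin p → A → ℝ)
    (hπ : ∀ s a, π s a = Real.exp (Q s a / β) / ∑ a', Real.exp (Q s a' / β))
    (W : Fin p → EuclideanSpace ℝ (Fin n))
    (hW : ∀ s i, W s i = ∑ a, π s a * (r s a i + γ * ∑ s', T s a s' * W s' i)) :
    ∀ s, HasGradientAt (fun θ' => V θ' s) (W s) θ := by
  intro s
  have hfix : ∀ x, V x = softBellman T γ β r (x, V x) := fun x => funext (hV x)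
  have hπ_softmax : π = fun t => softmax β (actionValue T γ r (θ, V θ) t) := by
    funext t a
    simp only [hπ, hQ, softmax, actionValue_apply]
  have hlip := lipschitzWith_of_parametric_fixedPoint (softBellman_lipschitzWith_fst hβ)
    (softBellman_contractingWith_snd hT0 hT1 hγ0 hγ1 hβ) hfix
  set L : EuclideanSpace ℝ (Fin n) →L[ℝ] Fin p → ℝ :=
    ContinuousLinearMap.pi fun s => InnerProductSpace.toDual ℝ _ (W s)
  have hVL : HasFDerivAt V L θ := by
    refine hasFDerivAt_of_parametric_fixedPoint hfix (hasFDerivAt_softBellman hβ.ne' _)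
      (IsBigO.of_bound _ (Eventually.of_forall fun x => hlip.norm_sub_le x θ)) hγ1
      (fun v => ?_) (fun h => ?_)
    · exact (norm_policyAvg_apply_le (fun _ => softmax_nonneg β _) (fun _ => sum_softmax β _)
        _).trans (norm_actionValue_zero_le hT0 hT1 hγ0 r v)
    · rw [← hπ_softmax]
      exact inner_eq_policyAvg_actionValue hW h
  exact (hasFDerivAt_apply s (V θ)).comp θ hVL
end

section
/- Sublinear convergence of inexact projected gradient for convex smooth objectives (Theorem G.4, degenerate case): let C ⊆ ℝ^n be a nonempty closed convex set, f : ℝ^n → ℝ convex and differentiable with ∇f α-Lipschitz (α > 0), and let x* be a minimizer of f over C. Suppose a sequence (x^m) in C satisfies x^{m+1} = proj_C( x^m − (1/α)(∇f(x^m) + e_{m+1}) ). Then for every m ≥ 1, f( (1/m) Σ_{i=1}^m x^i ) − f(x*) ≤ (α/(2m)) · ( ‖x^0 − x*‖₂ + (2/α) Σ_{i=1}^m ‖e_i‖₂ )². -/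
/-!
Write `dᵢ = ‖xⁱ - x*‖`. One inexact projected gradient step combines three inequalities: the
descent lemma for the `α`-smooth `f` at `xⁱ`, the first-order convexity inequality between `xⁱ`
and `x*`, and the variational inequality of the projection tested against `x* ∈ C`. Together
they give `f(xⁱ⁺¹) - f(x*) ≤ (α/2)(dᵢ² - dᵢ₊₁²) + ‖eᵢ₊₁‖ dᵢ₊₁`. Since the left side is
nonnegative, this forces `dᵢ₊₁ ≤ dᵢ + (2/α)‖eᵢ₊₁‖`, so every `dᵢ` is at most
`X = d₀ + (2/α) Σ ‖eᵢ‖`. Summing the step inequality telescopes to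
`Σ (f(xⁱ) - f(x*)) ≤ (α/2) d₀² + X Σ ‖eᵢ‖ ≤ (α/2) X²`, and Jensen's inequality for the average
finishes the proof.
-/

open InnerProductSpace Set Finset

theorem le_add_of_sq_le_sq_add_mul {a b c α : ℝ} (hα : 0 < α) (hb : 0 ≤ b)
    (hc : 0 ≤ c) (h : α / 2 * a ^ 2 ≤ α / 2 * b ^ 2 + c * a) : a ≤ b + 2 / α * c := by
  rcases le_or_gt a b with hab | hab
  · have : 0 ≤ 2 / α * c := by positivity
    linarith
  · have ha : 0 < a := hb.trans_lt hab
    have : α / 2 * (a - b) * a ≤ c * a := by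
      nlinarith [mul_nonneg (mul_nonneg hα.le (sub_nonneg.2 hab.le)) hb]
    have : α / 2 * (a - b) ≤ c := le_of_mul_le_mul_right this ha
    have : 2 / α * c = c / (α / 2) := by field_simp
    rw [this, ← sub_le_iff_le_add', le_div_iff₀ (by positivity)]
    linarith

theorem sum_Icc_le_of_step {α : ℝ} {φ d c : ℕ → ℝ}
    (hstep : ∀ i, φ (i + 1) ≤ α / 2 * (d i ^ 2 - d (i + 1) ^ 2) + c (i + 1) * d (i + 1))
    (m : ℕ) :
    ∑ i ∈ Icc 1 m, φ i ≤ α / 2 * (d 0 ^ 2 - d m ^ 2) + ∑ i ∈ Icc 1 m, c i * d i := by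
  induction m with
  | zero => simp
  | succ k ih =>
    rw [sum_Icc_succ_top (Nat.le_add_left 1 k), sum_Icc_succ_top (Nat.le_add_left 1 k)]
    linarith [hstep k]

theorem le_add_sum_Icc_of_le_add {d c : ℕ → ℝ} {K : ℝ}
    (hstep : ∀ i, d (i + 1) ≤ d i + K * c (i + 1)) (m : ℕ) :
    d m ≤ d 0 + K * ∑ i ∈ Icc 1 m, c i := by
  induction m with
  | zero => simp
  | succ k ih =>
    rw [sum_Icc_succ_top (Nat.le_add_left 1 k), mul_add]
    linarith [hstep k]

theorem sum_Icc_le_sq_of_step {α : ℝ} (hα : 0 < α) {φ d c : ℕ → ℝ} (hφ : ∀ i, 0 ≤ φ (i + 1))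
    (hd : ∀ i, 0 ≤ d i) (hc : ∀ i, 0 ≤ c i)
    (hstep : ∀ i, φ (i + 1) ≤ α / 2 * (d i ^ 2 - d (i + 1) ^ 2) + c (i + 1) * d (i + 1))
    (m : ℕ) : ∑ i ∈ Icc 1 m, φ i ≤ α / 2 * (d 0 + 2 / α * ∑ i ∈ Icc 1 m, c i) ^ 2 := by
  set S := ∑ i ∈ Icc 1 m, c i
  have hS : 0 ≤ S := sum_nonneg fun i _ ↦ hc i
  have hdist : ∀ i, d i ≤ d 0 + 2 / α * ∑ j ∈ Icc 1 i, c j :=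
    le_add_sum_Icc_of_le_add fun i ↦ le_add_of_sq_le_sq_add_mul hα (hd i) (hc _)
      (by linarith [hφ i, hstep i])
  have herror : ∑ i ∈ Icc 1 m, c i * d i ≤ S * (d 0 + 2 / α * S) := by
    rw [sum_mul]
    refine sum_le_sum fun i hi ↦ mul_le_mul_of_nonneg_left ((hdist i).trans ?_) (hc i)
    gcongr
    exact sum_le_sum_of_subset_of_nonneg (Icc_subset_Icc_right (mem_Icc.1 hi).2)
      fun j _ _ ↦ hc j
  have hexpand : α / 2 * (d 0 + 2 / α * S) ^ 2 =
      α / 2 * d 0 ^ 2 + 2 * d 0 * S + 2 / α * S ^ 2 := by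
    field_simp; ring
  have : 0 ≤ d 0 * S := mul_nonneg (hd 0) hS
  have : 0 ≤ α / 2 * d m ^ 2 := by positivity
  nlinarith [sum_Icc_le_of_step hstep m]

section Smooth

variable {E : Type*} [NormedAddCommGroup E] [InnerProductSpace ℝ E]

theorem inner_sub_nearest_le_zero {C : Set E} (hC : Convex ℝ C) {z p : E} (hp : p ∈ C)
    (hmin : ∀ y ∈ C, ‖p - z‖ ≤ ‖y - z‖) {y : E} (hy : y ∈ C) :
    ⟪z - p, y - p⟫_ℝ ≤ 0 := by
  have : Nonempty C := ⟨⟨p, hp⟩⟩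
  refine (norm_eq_iInf_iff_real_inner_le_zero hC hp).1 (le_antisymm ?_ ?_) y hy
  · exact le_ciInf fun w ↦ by simpa only [norm_sub_rev z] using hmin w w.2
  · have hbdd : BddBelow (range fun w : C ↦ ‖z - w‖) :=
      ⟨0, by rintro _ ⟨w, rfl⟩; positivity⟩
    exact ciInf_le hbdd ⟨p, hp⟩

theorem ConvexOn.map_inv_card_smul_sum_le {ι : Type*} {D : Set E} {f : E → ℝ}
    (hf : ConvexOn ℝ D f) {s : Finset ι} (hs : s.Nonempty) {p : ι → E}
    (hp : ∀ i ∈ s, p i ∈ D) :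
    f ((#s : ℝ)⁻¹ • ∑ i ∈ s, p i) ≤ (#s : ℝ)⁻¹ * ∑ i ∈ s, f (p i) := by
  have hcard : (#s : ℝ) ≠ 0 := by exact_mod_cast hs.card_pos.ne'
  simpa [← smul_sum, ← mul_sum] using
    hf.map_sum_le (w := fun _ ↦ (#s : ℝ)⁻¹) (fun _ _ ↦ by positivity)
      (by simp [hcard]) hp

variable [CompleteSpace E] {f : E → ℝ} {g : E → E}

theorem hasDerivAt_comp_lineMap_of_hasGradientAt (hg : ∀ x, HasGradientAt f (g x) x)
    (x y : E) (t : ℝ) :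
    HasDerivAt (fun s ↦ f (AffineMap.lineMap x y s))
      ⟪g (AffineMap.lineMap x y t), y - x⟫_ℝ t := by
  simpa [Function.comp_def] using
    (hg _).hasFDerivAt.comp_hasDerivAt t AffineMap.hasDerivAt_lineMap

theorem ConvexOn.add_inner_gradient_le (hf : ConvexOn ℝ univ f)
    (hg : ∀ x, HasGradientAt f (g x) x) (x y : E) :
    f x + ⟪g x, y - x⟫_ℝ ≤ f y := by
  have hline : ConvexOn ℝ univ (fun s ↦ f (AffineMap.lineMap x y s)) :=
    hf.comp_affineMap (AffineMap.lineMap x y)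
  have := hline.le_slope_of_hasDerivAt (mem_univ 0) (mem_univ 1) zero_lt_one
    (by simpa using hasDerivAt_comp_lineMap_of_hasGradientAt hg x y 0)
  simp only [slope_def_field, AffineMap.lineMap_apply_one, AffineMap.lineMap_apply_zero,
    sub_zero, div_one] at this
  linarith

theorem le_add_inner_gradient_add_sq_of_lipschitz {α : ℝ} (hg : ∀ x, HasGradientAt f (g x) x)
    (hLip : ∀ x y, ‖g x - g y‖ ≤ α * ‖x - y‖) (x y : E) :
    f y ≤ f x + ⟪g x, y - x⟫_ℝ + α / 2 * ‖y - x‖ ^ 2 := by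
  set h : ℝ → ℝ := fun t ↦
    f (AffineMap.lineMap x y t) - t * ⟪g x, y - x⟫_ℝ - α / 2 * t ^ 2 * ‖y - x‖ ^ 2
  have hderiv : ∀ t, HasDerivAt h
      (⟪g (AffineMap.lineMap x y t), y - x⟫_ℝ - ⟪g x, y - x⟫_ℝ - α * t * ‖y - x‖ ^ 2) t := by
    intro t
    have := ((hasDerivAt_comp_lineMap_of_hasGradientAt hg x y t).sub
      ((hasDerivAt_id' t).mul_const ⟪g x, y - x⟫_ℝ)).sub
        (((hasDerivAt_pow 2 t).const_mul (α / 2)).mul_const (‖y - x‖ ^ 2))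
    exact this.congr_deriv (by push_cast; ring)
  have hanti : AntitoneOn h (Icc 0 1) := by
    refine antitoneOn_of_hasDerivWithinAt_nonpos (convex_Icc 0 1)
      (HasDerivAt.continuousOn fun t _ ↦ hderiv t) (fun t _ ↦ (hderiv t).hasDerivWithinAt) ?_
    intro t ht
    rw [interior_Icc] at ht
    have hlip : ‖g (AffineMap.lineMap x y t) - g x‖ ≤ α * t * ‖y - x‖ := by
      have hsub : AffineMap.lineMap x y t - x = t • (y - x) := AffineMap.lineMap_vsub_left x y t
      simpa [hsub, norm_smul, abs_of_pos ht.1, mul_assoc] using hLip (AffineMap.lineMap x y t) x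
    calc ⟪g (AffineMap.lineMap x y t), y - x⟫_ℝ - ⟪g x, y - x⟫_ℝ - α * t * ‖y - x‖ ^ 2
        = ⟪g (AffineMap.lineMap x y t) - g x, y - x⟫_ℝ - α * t * ‖y - x‖ ^ 2 := by
          rw [inner_sub_left]
      _ ≤ ‖g (AffineMap.lineMap x y t) - g x‖ * ‖y - x‖ - α * t * ‖y - x‖ ^ 2 := by
          gcongr; exact real_inner_le_norm _ _
      _ ≤ 0 := by nlinarith [norm_nonneg (y - x)]
  have := hanti (left_mem_Icc.2 zero_le_one) (right_mem_Icc.2 zero_le_one) zero_le_one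
  simp only [h, AffineMap.lineMap_apply_one, AffineMap.lineMap_apply_zero, one_mul, one_pow,
    mul_one, zero_mul, zero_pow two_ne_zero, mul_zero, sub_zero] at this
  linarith

theorem inexact_projGrad_step_sub_le {C : Set E} (hC : Convex ℝ C) {α : ℝ} (hα : 0 < α)
    (hf : ConvexOn ℝ univ f) (hg : ∀ x, HasGradientAt f (g x) x)
    (hLip : ∀ x y, ‖g x - g y‖ ≤ α * ‖x - y‖) {u v w y : E} (hvC : v ∈ C)
    (hv : ∀ c ∈ C, ‖v - (u - (1 / α) • (g u + w))‖ ≤ ‖c - (u - (1 / α) • (g u + w))‖)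
    (hy : y ∈ C) :
    f v - f y ≤ α / 2 * (‖u - y‖ ^ 2 - ‖v - y‖ ^ 2) + ‖w‖ * ‖v - y‖ := by
  have hvi := inner_sub_nearest_le_zero hC hvC hv hy
  have hvi' : α * ⟪u - v, y - v⟫_ℝ ≤ ⟪g u, y - v⟫_ℝ + ⟪w, y - v⟫_ℝ := by
    have : u - (1 / α) • (g u + w) - v = (u - v) - (1 / α) • (g u + w) := by abel
    rw [this, inner_sub_left, real_inner_smul_left, inner_add_left] at hvi
    field_simp at hvi
    linarith
  have hdescent := le_add_inner_gradient_add_sq_of_lipschitz hg hLip u v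
  have hgradient := hf.add_inner_gradient_le hg u y
  have hcs : ⟪w, y - v⟫_ℝ ≤ ‖w‖ * ‖v - y‖ := norm_sub_rev v y ▸ real_inner_le_norm w (y - v)
  have hpolar : α / 2 * (‖u - y‖ ^ 2 - ‖v - y‖ ^ 2) =
      α / 2 * ‖u - v‖ ^ 2 - α * ⟪u - v, y - v⟫_ℝ := by
    rw [show u - y = (u - v) - (y - v) by abel, norm_sub_sq_real, norm_sub_rev y v]
    ring
  have hsplit : ⟪g u, v - u⟫_ℝ = -⟪g u, y - v⟫_ℝ + ⟪g u, y - u⟫_ℝ := by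
    rw [← inner_neg_right, ← inner_add_right]; congr 1; abel
  rw [norm_sub_rev v u] at hdescent
  linarith

end Smooth

theorem stmt_14_general {n : ℕ} (C : Set (EuclideanSpace ℝ (Fin n)))
    (hCconv : Convex ℝ C)
    (f : EuclideanSpace ℝ (Fin n) → ℝ) (α : ℝ) (hα : 0 < α)
    (hconv : ConvexOn ℝ Set.univ f)
    (g : EuclideanSpace ℝ (Fin n) → EuclideanSpace ℝ (Fin n))
    (hg : ∀ x, HasGradientAt f (g x) x)
    (hLip : ∀ x y, ‖g x - g y‖ ≤ α * ‖x - y‖)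
    (xstar : EuclideanSpace ℝ (Fin n)) (hxstarC : xstar ∈ C)
    (hxstar : ∀ y ∈ C, f xstar ≤ f y)
    (P : EuclideanSpace ℝ (Fin n) → EuclideanSpace ℝ (Fin n))
    (hP : ∀ z, P z ∈ C ∧ ∀ y ∈ C, ‖P z - z‖ ≤ ‖y - z‖)
    (e : ℕ → EuclideanSpace ℝ (Fin n))
    (x : ℕ → EuclideanSpace ℝ (Fin n))
    (hupd : ∀ m, x (m + 1) = P (x m - (1 / α) • (g (x m) + e (m + 1)))) :
    ∀ m : ℕ, 1 ≤ m →
      f ((m : ℝ)⁻¹ • ∑ i ∈ Finset.Icc 1 m, x i) - f xstar ≤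
        α / (2 * m) *
          (‖x 0 - xstar‖ + (2 / α) * ∑ i ∈ Finset.Icc 1 m, ‖e i‖) ^ 2 := by
  intro m hm
  have hxC : ∀ i, x (i + 1) ∈ C := fun i ↦ hupd i ▸ (hP _).1
  have hstep : ∀ i, f (x (i + 1)) - f xstar ≤
      α / 2 * (‖x i - xstar‖ ^ 2 - ‖x (i + 1) - xstar‖ ^ 2) +
        ‖e (i + 1)‖ * ‖x (i + 1) - xstar‖ := fun i ↦
    inexact_projGrad_step_sub_le hCconv hα hconv hg hLip (hxC i) (hupd i ▸ (hP _).2) hxstarC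
  have hgaps := sum_Icc_le_sq_of_step (φ := fun i ↦ f (x i) - f xstar) hα
    (fun i ↦ sub_nonneg.2 (hxstar _ (hxC i))) (fun i ↦ norm_nonneg (x i - xstar))
    (fun i ↦ norm_nonneg (e i)) hstep m
  have hjensen := hconv.map_inv_card_smul_sum_le (s := Icc 1 m) ⟨1, by simpa using hm⟩
    (p := x) fun _ _ ↦ mem_univ _
  have hcard : (#(Icc 1 m) : ℝ) = m := by simp
  have hm0 : (m : ℝ) ≠ 0 := Nat.cast_ne_zero.2 (by omega)
  have hgap_sum :
      ∑ i ∈ Icc 1 m, (f (x i) - f xstar) = ∑ i ∈ Icc 1 m, f (x i) - m * f xstar := by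
    simp [sum_sub_distrib]
  rw [hcard] at hjensen
  calc f ((m : ℝ)⁻¹ • ∑ i ∈ Icc 1 m, x i) - f xstar
      ≤ (m : ℝ)⁻¹ * ∑ i ∈ Icc 1 m, (f (x i) - f xstar) := by
        rw [hgap_sum, mul_sub, inv_mul_cancel_left₀ hm0]; linarith
    _ ≤ (m : ℝ)⁻¹ * (α / 2 * (‖x 0 - xstar‖ + 2 / α * ∑ i ∈ Icc 1 m, ‖e i‖) ^ 2) := by gcongr
    _ = _ := by field_simp

/-- Sublinear convergence of inexact projected gradient descent for convex smooth
objectives (Theorem G.4, degenerate case).  `P` is the Euclidean projection onto the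
nonempty closed convex set `C`, `f` is convex with an `α`-Lipschitz gradient `g`,
`xstar` minimizes `f` over `C`, and the iterates satisfy
`x^{m+1} = P(x^m − (1/α)(g(x^m) + e_{m+1}))`.  Then for all `m ≥ 1`, the averaged
iterate satisfies
`f((1/m) Σ_{i=1}^m x^i) − f(x*) ≤ (α/(2m)) (‖x^0 − x*‖ + (2/α) Σ_{i=1}^m ‖e_i‖)²`. -/
theorem stmt_14 {n : ℕ} (C : Set (EuclideanSpace ℝ (Fin n)))
    (hCne : C.Nonempty) (hCclosed : IsClosed C) (hCconv : Convex ℝ C)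
    (f : EuclideanSpace ℝ (Fin n) → ℝ) (α : ℝ) (hα : 0 < α)
    (hconv : ConvexOn ℝ Set.univ f)
    (g : EuclideanSpace ℝ (Fin n) → EuclideanSpace ℝ (Fin n))
    (hg : ∀ x, HasGradientAt f (g x) x)
    (hLip : ∀ x y, ‖g x - g y‖ ≤ α * ‖x - y‖)
    (xstar : EuclideanSpace ℝ (Fin n)) (hxstarC : xstar ∈ C)
    (hxstar : ∀ y ∈ C, f xstar ≤ f y)
    (P : EuclideanSpace ℝ (Fin n) → EuclideanSpace ℝ (Fin n))
    (hP : ∀ z, P z ∈ C ∧ ∀ y ∈ C, ‖P z - z‖ ≤ ‖y - z‖)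
    (e : ℕ → EuclideanSpace ℝ (Fin n))
    (x : ℕ → EuclideanSpace ℝ (Fin n)) (hx0 : x 0 ∈ C)
    (hupd : ∀ m, x (m + 1) = P (x m - (1 / α) • (g (x m) + e (m + 1)))) :
    ∀ m : ℕ, 1 ≤ m →
      f ((m : ℝ)⁻¹ • ∑ i ∈ Finset.Icc 1 m, x i) - f xstar ≤
        α / (2 * m) *
          (‖x 0 - xstar‖ + (2 / α) * ∑ i ∈ Finset.Icc 1 m, ‖e i‖) ^ 2 :=
  stmt_14_general C hCconv f α hα hconv g hg hLip xstar hxstarC hxstar P hP e x hupd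
end
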